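/- Combined lower bound for the general objective: for A : ℝ^{n×n}, p, q ∈ ℝⁿ, and any x ∈ ℝⁿ, the objective f(x) = max( maxᵢ,ⱼ(aᵢⱼ + xⱼ - xᵢ), maxᵢ(pᵢ - xᵢ), maxᵢ(xᵢ - qᵢ) ) satisfies f(x) ≥ max(λ, Δ), where λ = max_{1≤m≤n} (1/m)·maxᵢ(Aᵐ)ᵢᵢ and Δ = (1/2)·maxᵢ(pᵢ - qᵢ). -/

import Mathlib

noncomputable def msup {n : ℕ} (hn : 0 < n) (f : Fin n → ℝ) : ℝ :=
  Finset.univ.sup' (Finset.univ_nonempty_iff.mpr (Fin.pos_iff_nonempty.mp hn)) f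

noncomputable def minf {n : ℕ} (hn : 0 < n) (f : Fin n → ℝ) : ℝ :=
  Finset.univ.inf' (Finset.univ_nonempty_iff.mpr (Fin.pos_iff_nonempty.mp hn)) f

noncomputable def mpMul {n : ℕ} (hn : 0 < n) (A B : Fin n → Fin n → ℝ) :
    Fin n → Fin n → ℝ :=
  fun i j => msup hn (fun k => A i k + B k j)

noncomputable def mpPow {n : ℕ} (hn : 0 < n) (A : Fin n → Fin n → ℝ) : ℕ → Fin n → Fin n → ℝ
  | 0 => A
  | 1 => A
  | (m + 2) => mpMul hn A (mpPow hn A (m + 1))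

/-!
If `aᵢⱼ + xⱼ - xᵢ ≤ L` for every arc, the potentials `x` telescope along any walk, so a walk of
length `m` from `i` to `j` weighs at most `m L + xᵢ - xⱼ`; on closed walks this bounds every
diagonal entry of `Aᵐ` by `m L`, i.e. every cycle mean by `L`. The bound by `Δ` is just
`pᵢ - qᵢ = (pᵢ - xᵢ) + (xᵢ - qᵢ)`.
-/

section MaxPlus

variable {n : ℕ} (hn : 0 < n)

theorem le_msup (f : Fin n → ℝ) (i : Fin n) : f i ≤ msup hn f :=
  Finset.le_sup' f (Finset.mem_univ i)

theorem msup_le_iff {f : Fin n → ℝ} {c : ℝ} : msup hn f ≤ c ↔ ∀ i, f i ≤ c := by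
  simp [msup, Finset.sup'_le_iff]

theorem exists_msup_eq (f : Fin n → ℝ) : ∃ i, msup hn f = f i := by
  obtain ⟨i, -, hi⟩ := Finset.exists_mem_eq_sup' _ f
  exact ⟨i, hi⟩

theorem mpPow_succ_le_of_forall_le {A : Fin n → Fin n → ℝ} {x : Fin n → ℝ} {L : ℝ}
    (hL : ∀ i j, A i j + x j - x i ≤ L) (m : ℕ) (i j : Fin n) :
    mpPow hn A (m + 1) i j ≤ (m + 1) * L + x i - x j := by
  induction m generalizing i j with
  | zero =>
    simp only [mpPow, Nat.cast_zero, zero_add, one_mul]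
    linarith [hL i j]
  | succ m ih =>
    refine (msup_le_iff hn).mpr fun k => ?_
    push_cast
    linarith [hL i k, ih k j]

theorem cycleMean_le_of_forall_le {A : Fin n → Fin n → ℝ} {x : Fin n → ℝ} {L : ℝ}
    (hL : ∀ i j, A i j + x j - x i ≤ L) {m : ℕ} (hm : 1 ≤ m) :
    1 / (m : ℝ) * msup hn (fun i => mpPow hn A m i i) ≤ L := by
  obtain ⟨k, rfl⟩ := Nat.exists_eq_add_of_le' hm
  have hpos : (0 : ℝ) < (k + 1 : ℕ) := by positivity
  rw [one_div_mul_eq_div, div_le_iff₀ hpos, msup_le_iff]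
  intro i
  have := mpPow_succ_le_of_forall_le hn hL k i i
  push_cast
  linarith

theorem half_msup_sub_le (p q x : Fin n → ℝ) :
    1 / 2 * msup hn (fun i => p i - q i) ≤
      max (msup hn (fun i => p i - x i)) (msup hn (fun i => x i - q i)) := by
  obtain ⟨i, hi⟩ := exists_msup_eq hn (fun i => p i - q i)
  rw [hi]
  have hp := le_msup hn (fun i => p i - x i) i
  have hq := le_msup hn (fun i => x i - q i) i
  have := le_max_left (msup hn (fun i => p i - x i)) (msup hn (fun i => x i - q i))
  have := le_max_right (msup hn (fun i => p i - x i)) (msup hn (fun i => x i - q i))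
  linarith

end MaxPlus

theorem stmt14 {n : ℕ} (hn : 0 < n) (A : Fin n → Fin n → ℝ) (p q : Fin n → ℝ)
    (lam Δ : ℝ)
    (hlam : lam = (Finset.Icc 1 n).sup' (Finset.nonempty_Icc.mpr hn)
      (fun m => (1 / (m : ℝ)) * msup hn (fun i => mpPow hn A m i i)))
    (hΔ : Δ = (1 / 2) * msup hn (fun i => p i - q i)) :
    ∀ x : Fin n → ℝ,
      max (msup hn (fun i => msup hn (fun j => A i j + x j - x i)))
          (max (msup hn (fun i => p i - x i)) (msup hn (fun i => x i - q i))) ≥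
        max lam Δ := by
  intro x
  set L := msup hn (fun i => msup hn (fun j => A i j + x j - x i))
  have hL : ∀ i j, A i j + x j - x i ≤ L :=
    fun i j => (le_msup hn _ j).trans (le_msup hn (fun i => msup hn (fun j => A i j + x j - x i)) i)
  have hlam_le : lam ≤ L := by
    rw [hlam, Finset.sup'_le_iff]
    exact fun m hm => cycleMean_le_of_forall_le hn hL (Finset.mem_Icc.mp hm).1
  have hΔ_le := hΔ ▸ half_msup_sub_le hn p q x
  exact max_le_max hlam_le hΔ_le
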